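/- Let b : ℝ → ℝ be given by b(x) = √x for x ≥ 0 and b(x) = −3√(−x) for x < 0. Then a solution ξ ∈ S_0(b) is a leaving solution (i.e., there exists τ > 0 with ξ(t) ≠ 0 for all t ∈ (0,τ)) if and only if either ξ(t) = t²/4 for all t ≥ 0 or ξ(t) = −9t²/4 for all t ≥ 0. In particular, the leaving solution set LS(0) has exactly two elements. -/

import Mathlib

open MeasureTheory Set Filter Topology
open scoped NNReal ENNReal

noncomputable section

/-- A solution of the one-dimensional ODE `ξ' = b(ξ)` on `[0,∞)` with initial value `x`. -/
def IsSol1 (b : ℝ → ℝ) (x : ℝ) (ξ : ℝ≥0 → ℝ) : Prop :=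
  Continuous ξ ∧ ξ 0 = x ∧
    ∀ t : ℝ≥0, ξ t = x + ∫ s in (0:ℝ)..(t:ℝ), b (ξ s.toNNReal)

/-- Exit time of a path from `K`, valued in `[0,∞]`. -/
def exitTime1 (K : Set ℝ) (ξ : ℝ≥0 → ℝ) : ℝ≥0∞ :=
  ⨅ t ∈ {t : ℝ≥0 | ξ t ∉ K}, (t : ℝ≥0∞)

/-- The leaving solutions starting from `0`. -/
def LS1 (b : ℝ → ℝ) : Set (ℝ≥0 → ℝ) :=
  {ξ | IsSol1 b 0 ξ ∧ ∃ τ : ℝ≥0, 0 < τ ∧ ∀ t : ℝ≥0, 0 < t → t < τ → ξ t ≠ 0}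

open Classical in
/-- The non-symmetric field `b(x) = √x` for `x ≥ 0`, `b(x) = -3√(-x)` for `x < 0`. -/
def bns (x : ℝ) : ℝ := if 0 ≤ x then Real.sqrt x else -3 * Real.sqrt (-x)

lemma bns_eq (x : ℝ) : bns x = Real.sqrt x - 3 * Real.sqrt (-x) := by
  unfold bns
  split_ifs with h
  · rw [Real.sqrt_eq_zero'.mpr (by linarith : -x ≤ 0)]; ring
  · rw [Real.sqrt_eq_zero'.mpr (by linarith : x ≤ 0)]; ring

lemma continuous_bns : Continuous bns := by
  have : bns = fun x => Real.sqrt x - 3 * Real.sqrt (-x) := funext bns_eq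
  rw [this]; continuity

lemma bns_zero : bns 0 = 0 := by simp [bns]

lemma bns_of_nonneg {x : ℝ} (hx : 0 ≤ x) : bns x = Real.sqrt x := by
  rw [bns_eq, Real.sqrt_eq_zero'.mpr (by linarith : -x ≤ 0)]; ring

lemma bns_of_nonpos {x : ℝ} (hx : x ≤ 0) : bns x = -3 * Real.sqrt (-x) := by
  rw [bns_eq, Real.sqrt_eq_zero'.mpr hx]; ring

lemma isSol_f1 : IsSol1 bns 0 (fun t : ℝ≥0 => (t : ℝ) ^ 2 / 4) := by
  refine ⟨by continuity, by simp, fun t => ?_⟩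
  have h1 : ∀ s ∈ uIcc (0:ℝ) (t:ℝ), bns ((((s.toNNReal : ℝ≥0) : ℝ)) ^ 2 / 4) = s / 2 := by
    intro s hs
    rw [uIcc_of_le (t.coe_nonneg)] at hs
    have hs0 : 0 ≤ s := hs.1
    rw [Real.coe_toNNReal s hs0, bns_of_nonneg (by positivity),
      show s ^ 2 / 4 = (s / 2) ^ 2 by ring, Real.sqrt_sq (by positivity)]
  rw [intervalIntegral.integral_congr h1]
  simp [intervalIntegral.integral_div]
  ring

lemma isSol_f2 : IsSol1 bns 0 (fun t : ℝ≥0 => -(9 * (t : ℝ) ^ 2) / 4) := by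
  refine ⟨by continuity, by simp, fun t => ?_⟩
  have h1 : ∀ s ∈ uIcc (0:ℝ) (t:ℝ), bns (-(9 * (((s.toNNReal : ℝ≥0) : ℝ)) ^ 2) / 4) = -9 * s / 2 := by
    intro s hs
    rw [uIcc_of_le (t.coe_nonneg)] at hs
    have hs0 : 0 ≤ s := hs.1
    rw [Real.coe_toNNReal s hs0, bns_of_nonpos (by nlinarith [sq_nonneg s]),
      show -(-(9 * s ^ 2) / 4) = (3 * s / 2) ^ 2 by ring, Real.sqrt_sq (by positivity)]
    ring
  rw [intervalIntegral.integral_congr h1]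
  have : ∀ s : ℝ, -9 * s / 2 = s * (-9/2) := fun s => by ring
  simp only [this]
  open intervalIntegral in rw [intervalIntegral.integral_mul_const, integral_id]
  ring

lemma pos_persist {η : ℝ → ℝ} (hd : ∀ t, HasDerivAt η (bns (η t)) t)
    {t₀ t₁ : ℝ} (h0 : 0 < η t₀) (h01 : t₀ ≤ t₁) : 0 < η t₁ := by
  have hcont : Continuous η := continuous_iff_continuousAt.mpr fun x => (hd x).continuousAt
  by_contra hcon
  push_neg at hcon
  set A : Set ℝ := Icc t₀ t₁ ∩ {t | η t ≤ 0} with hA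
  have hAne : A.Nonempty := ⟨t₁, ⟨h01, le_refl _⟩, hcon⟩
  have hAclosed : IsClosed A := isClosed_Icc.inter (isClosed_le hcont continuous_const)
  have hAbdd : BddBelow A := bddBelow_Icc.mono inter_subset_left
  set T := sInf A with hT
  have hTA : T ∈ A := hAclosed.csInf_mem hAne hAbdd
  have hT0 : t₀ < T := by
    rcases lt_or_ge t₀ T with h | h
    · exact h
    · exfalso
      have hEq : T = t₀ := le_antisymm h hTA.1.1
      rw [hEq] at hTA
      exact absurd hTA.2 (not_le.mpr h0)
  have hpos : ∀ s ∈ Ico t₀ T, 0 < η s := by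
    intro s hs
    by_contra hns
    push_neg at hns
    have hsA : s ∈ A := ⟨⟨hs.1, hs.2.le.trans hTA.1.2⟩, hns⟩
    exact absurd (csInf_le hAbdd hsA) (not_le.mpr hs.2)
  have hmono : MonotoneOn η (Icc t₀ T) := by
    apply monotoneOn_of_deriv_nonneg (convex_Icc _ _) hcont.continuousOn
    · intro x _; exact (hd x).differentiableAt.differentiableWithinAt
    · intro x hx
      rw [interior_Icc] at hx
      rw [(hd x).deriv, bns_of_nonneg (hpos x ⟨hx.1.le, hx.2⟩).le]
      exact Real.sqrt_nonneg _
  have hle := hmono ⟨le_refl _, hT0.le⟩ ⟨hT0.le, le_refl _⟩ hT0.le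
  have h2 : η T ≤ 0 := hTA.2
  linarith

lemma neg_persist {η : ℝ → ℝ} (hd : ∀ t, HasDerivAt η (bns (η t)) t)
    {t₀ t₁ : ℝ} (h0 : η t₀ < 0) (h01 : t₀ ≤ t₁) : η t₁ < 0 := by
  have hcont : Continuous η := continuous_iff_continuousAt.mpr fun x => (hd x).continuousAt
  by_contra hcon
  push_neg at hcon
  set A : Set ℝ := Icc t₀ t₁ ∩ {t | 0 ≤ η t} with hA
  have hAne : A.Nonempty := ⟨t₁, ⟨h01, le_refl _⟩, hcon⟩
  have hAclosed : IsClosed A := isClosed_Icc.inter (isClosed_le continuous_const hcont)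
  have hAbdd : BddBelow A := bddBelow_Icc.mono inter_subset_left
  set T := sInf A with hT
  have hTA : T ∈ A := hAclosed.csInf_mem hAne hAbdd
  have hT0 : t₀ < T := by
    rcases lt_or_ge t₀ T with h | h
    · exact h
    · exfalso
      have hEq : T = t₀ := le_antisymm h hTA.1.1
      rw [hEq] at hTA
      exact absurd hTA.2 (not_le.mpr h0)
  have hneg : ∀ s ∈ Ico t₀ T, η s < 0 := by
    intro s hs
    by_contra hns
    push_neg at hns
    have hsA : s ∈ A := ⟨⟨hs.1, hs.2.le.trans hTA.1.2⟩, hns⟩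
    exact absurd (csInf_le hAbdd hsA) (not_le.mpr hs.2)
  have hmono : AntitoneOn η (Icc t₀ T) := by
    apply antitoneOn_of_deriv_nonpos (convex_Icc _ _) hcont.continuousOn
    · intro x _; exact (hd x).differentiableAt.differentiableWithinAt
    · intro x hx
      rw [interior_Icc] at hx
      rw [(hd x).deriv, bns_of_nonpos (hneg x ⟨hx.1.le, hx.2⟩).le]
      have := Real.sqrt_nonneg (-(η x))
      linarith
  have hle := hmono ⟨le_refl _, hT0.le⟩ ⟨hT0.le, le_refl _⟩ hT0.le
  have h2 : (0:ℝ) ≤ η T := hTA.2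
  linarith

lemma eq_sq {η : ℝ → ℝ} (hd : ∀ t, HasDerivAt η (bns (η t)) t) (h0 : η 0 = 0)
    (hpos : ∀ t : ℝ, 0 < t → 0 < η t) : ∀ t : ℝ, 0 ≤ t → η t = t ^ 2 / 4 := by
  have hcont : Continuous η := continuous_iff_continuousAt.mpr fun x => (hd x).continuousAt
  set φ : ℝ → ℝ := fun t => Real.sqrt (η t) - t / 2 with hφdef
  have hφcont : Continuous φ := ((Real.continuous_sqrt).comp hcont).sub (by continuity)
  have hφ0 : φ 0 = 0 := by simp [hφdef, h0]
  have hφd : ∀ x : ℝ, 0 < x → HasDerivAt φ 0 x := by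
    intro x hx
    have hηx := hpos x hx
    have h1 : HasDerivAt (fun t => Real.sqrt (η t)) (1 / (2 * Real.sqrt (η x)) * bns (η x)) x :=
      (Real.hasDerivAt_sqrt (ne_of_gt hηx)).comp x (hd x)
    have h2 : (1 : ℝ) / (2 * Real.sqrt (η x)) * bns (η x) = 1 / 2 := by
      rw [bns_of_nonneg hηx.le]
      have hne : Real.sqrt (η x) ≠ 0 := by positivity
      field_simp
    rw [h2] at h1
    have h3 : HasDerivAt (fun t : ℝ => t / 2) (1 / 2) x := by
      simpa using (hasDerivAt_id x).div_const 2
    have h4 := h1.sub h3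
    rw [sub_self] at h4
    exact h4
  have key : ∀ t : ℝ, 0 < t → φ t = 0 := by
    intro t ht
    have hconst : ∀ ε : ℝ, 0 < ε → ε ≤ t → φ t = φ ε := by
      intro ε hε hεt
      exact constant_of_has_deriv_right_zero (f := φ) (a := ε) (b := t)
        hφcont.continuousOn
        (fun y hy => (hφd y (lt_of_lt_of_le hε hy.1)).hasDerivWithinAt)
        t ⟨hεt, le_refl _⟩
    have h1 : Tendsto φ (𝓝[>] (0:ℝ)) (𝓝 (φ 0)) :=
      (hφcont.continuousAt).continuousWithinAt.tendsto
    have h2 : Tendsto (fun _ : ℝ => φ t) (𝓝[>] (0:ℝ)) (𝓝 (φ 0)) := by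
      refine h1.congr' ?_
      filter_upwards [Ioc_mem_nhdsGT_of_mem ⟨le_refl (0:ℝ), ht⟩] with ε hε
      exact (hconst ε hε.1 hε.2).symm
    rw [hφ0] at h2
    exact (tendsto_nhds_unique tendsto_const_nhds h2)
  intro t ht
  rcases eq_or_lt_of_le ht with h | h
  · rw [← h, h0]; norm_num
  · have hs := key t h
    have hsq : Real.sqrt (η t) = t / 2 := by
      have : Real.sqrt (η t) - t / 2 = 0 := hs
      linarith
    have hη : 0 ≤ η t := (hpos t h).le
    calc η t = Real.sqrt (η t) ^ 2 := (Real.sq_sqrt hη).symm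
      _ = (t / 2) ^ 2 := by rw [hsq]
      _ = t ^ 2 / 4 := by ring

lemma eq_neg_sq {η : ℝ → ℝ} (hd : ∀ t, HasDerivAt η (bns (η t)) t) (h0 : η 0 = 0)
    (hneg : ∀ t : ℝ, 0 < t → η t < 0) : ∀ t : ℝ, 0 ≤ t → η t = -(9 * t ^ 2) / 4 := by
  have hcont : Continuous η := continuous_iff_continuousAt.mpr fun x => (hd x).continuousAt
  set φ : ℝ → ℝ := fun t => Real.sqrt (-η t) - 3 * t / 2 with hφdef
  have hφcont : Continuous φ := ((Real.continuous_sqrt).comp hcont.neg).sub (by continuity)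
  have hφ0 : φ 0 = 0 := by simp [hφdef, h0]
  have hφd : ∀ x : ℝ, 0 < x → HasDerivAt φ 0 x := by
    intro x hx
    have hηx := hneg x hx
    have hpos' : 0 < -η x := by linarith
    have h1 : HasDerivAt (fun t => Real.sqrt (-η t)) (1 / (2 * Real.sqrt (-η x)) * (-bns (η x))) x :=
      (Real.hasDerivAt_sqrt (ne_of_gt hpos')).comp x (hd x).neg
    have h2 : (1 : ℝ) / (2 * Real.sqrt (-η x)) * (-bns (η x)) = 3 / 2 := by
      rw [bns_of_nonpos hηx.le]
      have hne : Real.sqrt (-η x) ≠ 0 := by positivity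
      field_simp
    rw [h2] at h1
    have h3 : HasDerivAt (fun t : ℝ => 3 * t / 2) (3 / 2) x := by
      have := ((hasDerivAt_id x).const_mul (3:ℝ)).div_const 2
      simpa using this
    have h4 := h1.sub h3
    rw [sub_self] at h4
    exact h4
  have key : ∀ t : ℝ, 0 < t → φ t = 0 := by
    intro t ht
    have hconst : ∀ ε : ℝ, 0 < ε → ε ≤ t → φ t = φ ε := by
      intro ε hε hεt
      exact constant_of_has_deriv_right_zero (f := φ) (a := ε) (b := t)
        hφcont.continuousOn
        (fun y hy => (hφd y (lt_of_lt_of_le hε hy.1)).hasDerivWithinAt)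
        t ⟨hεt, le_refl _⟩
    have h1 : Tendsto φ (𝓝[>] (0:ℝ)) (𝓝 (φ 0)) :=
      (hφcont.continuousAt).continuousWithinAt.tendsto
    have h2 : Tendsto (fun _ : ℝ => φ t) (𝓝[>] (0:ℝ)) (𝓝 (φ 0)) := by
      refine h1.congr' ?_
      filter_upwards [Ioc_mem_nhdsGT_of_mem ⟨le_refl (0:ℝ), ht⟩] with ε hε
      exact (hconst ε hε.1 hε.2).symm
    rw [hφ0] at h2
    exact (tendsto_nhds_unique tendsto_const_nhds h2)
  intro t ht
  rcases eq_or_lt_of_le ht with h | h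
  · rw [← h, h0]; norm_num
  · have hs := key t h
    have hsq : Real.sqrt (-η t) = 3 * t / 2 := by
      have : Real.sqrt (-η t) - 3 * t / 2 = 0 := hs
      linarith
    have hη : 0 ≤ -η t := by linarith [hneg t h]
    have : -η t = (3 * t / 2) ^ 2 := by
      calc -η t = Real.sqrt (-η t) ^ 2 := (Real.sq_sqrt hη).symm
        _ = (3 * t / 2) ^ 2 := by rw [hsq]
    have h9 : (3 * t / 2) ^ 2 = 9 * t ^ 2 / 4 := by ring
    linarith

lemma eta_deriv {ξ : ℝ≥0 → ℝ} (hξ : IsSol1 bns 0 ξ) :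
    ∀ t : ℝ, HasDerivAt (fun u : ℝ => ξ u.toNNReal) (bns (ξ t.toNNReal)) t := by
  set η : ℝ → ℝ := fun u => ξ u.toNNReal with hηdef
  have hcont : Continuous η := hξ.1.comp continuous_real_toNNReal
  have hint : ∀ t : ℝ, η t = ∫ s in (0:ℝ)..t, bns (η s) := by
    intro t
    rcases le_or_gt 0 t with ht | ht
    · have h := hξ.2.2 t.toNNReal
      rw [Real.coe_toNNReal t ht] at h
      simpa [hηdef] using h
    · have h1 : η t = 0 := by
        simp only [hηdef, Real.toNNReal_of_nonpos ht.le]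
        exact hξ.2.1
      have h2 : ∀ s ∈ uIcc (0:ℝ) t, bns (η s) = (fun _ : ℝ => (0:ℝ)) s := by
        intro s hs
        rw [uIcc_of_ge ht.le] at hs
        simp only [hηdef, Real.toNNReal_of_nonpos hs.2]
        rw [hξ.2.1, bns_zero]
      rw [h1, intervalIntegral.integral_congr h2]
      simp
  intro t
  have hst := ((continuous_bns.comp hcont).integral_hasStrictDerivAt 0 t).hasDerivAt
  exact hst.congr_of_eventuallyEq (Filter.Eventually.of_forall hint)

lemma unique_leaving {ξ : ℝ≥0 → ℝ} (hξ : IsSol1 bns 0 ξ) (hL : ξ ∈ LS1 bns) :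
    (∀ t : ℝ≥0, ξ t = (t : ℝ) ^ 2 / 4) ∨ (∀ t : ℝ≥0, ξ t = -(9 * (t : ℝ) ^ 2) / 4) := by
  obtain ⟨-, τ, hτ, hne⟩ := hL
  set η : ℝ → ℝ := fun u => ξ u.toNNReal with hηdef
  have hd : ∀ t : ℝ, HasDerivAt η (bns (η t)) t := eta_deriv hξ
  have hcont : Continuous η := continuous_iff_continuousAt.mpr fun x => (hd x).continuousAt
  have h0 : η 0 = 0 := by
    simp only [hηdef, Real.toNNReal_zero]
    exact hξ.2.1
  have hτ' : (0:ℝ) < (τ:ℝ) := hτ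
  have hne' : ∀ s : ℝ, 0 < s → s < (τ:ℝ) → η s ≠ 0 := by
    intro s hs hsτ
    exact hne _ (Real.toNNReal_pos.mpr hs) ((Real.toNNReal_lt_iff_lt_coe hs.le).mpr hsτ)
  set m : ℝ := (τ:ℝ) / 2 with hm
  have hm1 : 0 < m := by positivity
  have hm2 : m < (τ:ℝ) := by simp only [hm]; linarith
  have hmne : η m ≠ 0 := hne' m hm1 hm2
  have hsign : (∀ s : ℝ, 0 < s → s < (τ:ℝ) → 0 < η s) ∨
      (∀ s : ℝ, 0 < s → s < (τ:ℝ) → η s < 0) := by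
    rcases hmne.lt_or_gt with hmlt | hmgt
    · right
      intro s hs hsτ
      rcases (hne' s hs hsτ).lt_or_gt with h | h
      · exact h
      · exfalso
        have h01 : (0:ℝ) ∈ uIcc (η m) (η s) := by
          rw [mem_uIcc]; left; exact ⟨hmlt.le, h.le⟩
        obtain ⟨c, hc, hc0⟩ := intermediate_value_uIcc (f := η) (a := m) (b := s)
          hcont.continuousOn h01
        rcases mem_uIcc.mp hc with ⟨h1, h2⟩ | ⟨h1, h2⟩ <;>
          exact hne' c (by linarith) (by linarith) hc0
    · left
      intro s hs hsτ
      rcases (hne' s hs hsτ).lt_or_gt with h | h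
      · exfalso
        have h01 : (0:ℝ) ∈ uIcc (η s) (η m) := by
          rw [mem_uIcc]; left; exact ⟨h.le, hmgt.le⟩
        obtain ⟨c, hc, hc0⟩ := intermediate_value_uIcc (f := η) (a := s) (b := m)
          hcont.continuousOn h01
        rcases mem_uIcc.mp hc with ⟨h1, h2⟩ | ⟨h1, h2⟩ <;>
          exact hne' c (by linarith) (by linarith) hc0
      · exact h
  have hξη : ∀ t : ℝ≥0, ξ t = η (t:ℝ) := by
    intro t
    simp only [hηdef, Real.toNNReal_coe]
  rcases hsign with hp | hn
  · left
    intro t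
    have hpos : ∀ s : ℝ, 0 < s → 0 < η s := by
      intro s hs
      have h1 : 0 < min s m := lt_min hs hm1
      have h2 : min s m < (τ:ℝ) := lt_of_le_of_lt (min_le_right s m) hm2
      exact pos_persist hd (hp _ h1 h2) (min_le_left s m)
    rw [hξη t]
    exact eq_sq hd h0 hpos (t:ℝ) t.coe_nonneg
  · right
    intro t
    have hneg : ∀ s : ℝ, 0 < s → η s < 0 := by
      intro s hs
      have h1 : 0 < min s m := lt_min hs hm1
      have h2 : min s m < (τ:ℝ) := lt_of_le_of_lt (min_le_right s m) hm2
      exact neg_persist hd (hn _ h1 h2) (min_le_left s m)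
    rw [hξη t]
    exact eq_neg_sq hd h0 hneg (t:ℝ) t.coe_nonneg

lemma mem1 : (fun t : ℝ≥0 => (t : ℝ) ^ 2 / 4) ∈ LS1 bns := by
  refine ⟨isSol_f1, 1, one_pos, fun t ht _ => ?_⟩
  have h := NNReal.coe_pos.mpr ht
  simp only
  positivity

lemma mem2 : (fun t : ℝ≥0 => -(9 * (t : ℝ) ^ 2) / 4) ∈ LS1 bns := by
  refine ⟨isSol_f2, 1, one_pos, fun t ht _ => ?_⟩
  have h : 0 < (t:ℝ) := NNReal.coe_pos.mpr ht
  have h2 : 0 < (t:ℝ) ^ 2 := by positivity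
  simp only
  intro hc
  nlinarith

/-- for the non-symmetric field `bns`, a solution starting from `0` is a
leaving solution iff it is `t ↦ t²/4` or `t ↦ -9t²/4`; in particular `LS(0)` has exactly
two elements. -/
theorem leaving_solutions_nonsymmetric :
    (∀ ξ : ℝ≥0 → ℝ, IsSol1 bns 0 ξ →
      (ξ ∈ LS1 bns ↔
        (∀ t : ℝ≥0, ξ t = (t : ℝ) ^ 2 / 4) ∨ (∀ t : ℝ≥0, ξ t = -(9 * (t : ℝ) ^ 2) / 4))) ∧
    LS1 bns = {fun t : ℝ≥0 => (t : ℝ) ^ 2 / 4, fun t : ℝ≥0 => -(9 * (t : ℝ) ^ 2) / 4} ∧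
    (fun t : ℝ≥0 => (t : ℝ) ^ 2 / 4) ≠ (fun t : ℝ≥0 => -(9 * (t : ℝ) ^ 2) / 4) := by
  refine ⟨fun ξ hξ => ⟨fun hL => unique_leaving hξ hL, fun h => ?_⟩, ?_, ?_⟩
  · rcases h with h | h
    · rw [funext h]; exact mem1
    · rw [funext h]; exact mem2
  · ext ξ
    simp only [mem_insert_iff, mem_singleton_iff]
    constructor
    · intro hL
      rcases unique_leaving hL.1 hL with h | h
      · left; exact funext h
      · right; exact funext h
    · rintro (rfl | rfl)
      · exact mem1
      · exact mem2
  · intro h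
    have := congrFun h 1
    norm_num at this
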